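/- For all α > 0, β > 0, c > 0, u > 0 and 0 < v < t: ∫_v^t ((u+cv)/(u+cz)) · e^{−β(u+cz)} · Σ_{n=1}^∞ [(β(u+cz))^n/n!] · [α(α(z−v))^{n−1}/(n−1)!] · e^{−α(z−v)} dz = √(βαc) · (v + u/c) · e^{−βu} · e^{−βcv} · ∫₀^{t−v} [I₁(2√(βαc·(y + v + u/c)·y)) / √((y + v + u/c)·y)] · e^{−(βc+α)y} dy. (In the renewal model with inter-arrival times T exponential with parameter α and jump sizes Y exponential with parameter β, the left-hand side equals the conditional probability P{v < τ ≤ t | T₁ = v} of first crossing of the level u + cs by the compound renewal process before time t.) -/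

import Mathlib

/-!
After the substitution `z = v + y`, the integrands agree pointwise. With `p = β(u + cz)` and
`q = α(z - v)`, the series is `α p e^{-q} Σ (pq)^n / (n! (n+1)!)`, and
`Σ s^n / (n! (n+1)!) = I₁(2√s) / √s`; here `pq = βαc (y + v + u/c) y`, and the remaining
exponentials and constants match after `u + cv = c (v + u/c)`.
-/

open MeasureTheory Real

/-- Modified Bessel function of the first kind of order 1:
`I₁(w) = Σ_{k≥0} (w/2)^{2k+1}/(k!·(k+1)!)`. -/
noncomputable def besselI1 (w : ℝ) : ℝ :=
  ∑' k : ℕ, (w / 2) ^ (2 * k + 1) / ((k.factorial : ℝ) * ((k + 1).factorial : ℝ))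

open Nat in
theorem tsum_pow_div_factorial_mul_factorial_succ {s : ℝ} (hs : 0 < s) :
    ∑' k : ℕ, s ^ k / ((k ! : ℝ) * ((k + 1)! : ℝ)) = besselI1 (2 * √s) / √s := by
  have hs' : √s ≠ 0 := by positivity
  rw [eq_div_iff hs', ← tsum_mul_right, besselI1]
  refine tsum_congr fun k => ?_
  rw [mul_div_cancel_left₀ _ two_ne_zero, pow_succ, pow_mul, sq_sqrt hs.le]
  ring

open Nat in
theorem tsum_pow_succ_div_factorial_mul_pow_div_factorial (α p q : ℝ) :
    ∑' n : ℕ, p ^ (n + 1) / ((n + 1)! : ℝ) * (α * q ^ n / (n ! : ℝ)) * exp (-q)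
      = α * p * exp (-q) * ∑' n : ℕ, (p * q) ^ n / ((n ! : ℝ) * ((n + 1)! : ℝ)) := by
  rw [← tsum_mul_left]
  refine tsum_congr fun n => ?_
  rw [pow_succ, mul_pow]
  ring

theorem intervalIntegral_eq_of_shift {f g : ℝ → ℝ} {a b : ℝ} (hab : a ≤ b)
    (h : ∀ y ∈ Set.Ioc 0 (b - a), f (y + a) = g y) :
    ∫ z in a..b, f z = ∫ y in (0:ℝ)..(b - a), g y := by
  rw [← intervalIntegral.integral_congr_ae (ae_of_all _ fun y hy => h y ?_),
    intervalIntegral.integral_comp_add_right, zero_add, sub_add_cancel]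
  rwa [Set.uIoc_of_le (sub_nonneg.mpr hab)] at hy

theorem first_crossing_integrand_eq {α β c u v y : ℝ} (hα : 0 < α) (hβ : 0 < β) (hc : 0 < c)
    (hu : 0 < u) (hv : 0 < v) (hy : 0 < y) :
    (u + c * v) / (u + c * (y + v)) * exp (-(β * (u + c * (y + v)))) *
      ∑' n : ℕ,
        (β * (u + c * (y + v))) ^ (n + 1) / ((n + 1).factorial : ℝ) *
          (α * (α * ((y + v) - v)) ^ n / (n.factorial : ℝ)) *
          exp (-(α * ((y + v) - v)))
    = √(β * α * c) * (v + u / c) * exp (-(β * u)) * exp (-(β * c * v)) *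
        (besselI1 (2 * √(β * α * c * (y + v + u / c) * y)) /
            √((y + v + u / c) * y) * exp (-((β * c + α) * y))) := by
  have hA : 0 < y + v + u / c := by positivity
  have hpq :
      β * (u + c * (y + v)) * (α * ((y + v) - v)) = β * α * c * (y + v + u / c) * y := by
    field_simp; ring
  have hexp : exp (-(β * (u + c * (y + v)))) * exp (-(α * ((y + v) - v)))
      = exp (-(β * u)) * exp (-(β * c * v)) * exp (-((β * c + α) * y)) := by
    simp only [← exp_add]; ring_nf
  rw [tsum_pow_succ_div_factorial_mul_pow_div_factorial, hpq,
    tsum_pow_div_factorial_mul_factorial_succ (by positivity),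
    show β * α * c * (y + v + u / c) * y = (β * α * c) * ((y + v + u / c) * y) by ring,
    sqrt_mul (by positivity)]
  have hP : u + c * (y + v) ≠ 0 := by positivity
  have hk : 0 < √(β * α * c) := by positivity
  have hr : 0 < √((y + v + u / c) * y) := by positivity
  generalize besselI1 _ = I
  calc _ = (u + c * v) * β * α *
          (exp (-(β * (u + c * (y + v)))) * exp (-(α * ((y + v) - v)))) * I /
            (√(β * α * c) * √((y + v + u / c) * y)) := by
        field_simp
    _ = √(β * α * c) ^ 2 * (v + u / c) *
          (exp (-(β * u)) * exp (-(β * c * v)) * exp (-((β * c + α) * y))) * I /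
            (√(β * α * c) * √((y + v + u / c) * y)) := by
        rw [hexp, sq_sqrt (by positivity)]; field_simp; ring
    _ = _ := by field_simp

/-- Closed form, in terms of `I₁`, of the conditional probability
`P{v < τ ≤ t | T₁ = v}` of first level crossing for exponential inter-arrival
times (parameter `α`) and exponential jumps (parameter `β`). -/
theorem first_crossing_exponential (α β c u v t : ℝ)
    (hα : 0 < α) (hβ : 0 < β) (hc : 0 < c) (hu : 0 < u) (hv : 0 < v) (hvt : v < t) :
    (∫ z in v..t,
        (u + c * v) / (u + c * z) * Real.exp (-(β * (u + c * z))) *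
          ∑' n : ℕ,
            (β * (u + c * z)) ^ (n + 1) / ((n + 1).factorial : ℝ) *
              (α * (α * (z - v)) ^ n / (n.factorial : ℝ)) *
              Real.exp (-(α * (z - v))))
      = Real.sqrt (β * α * c) * (v + u / c) * Real.exp (-(β * u)) * Real.exp (-(β * c * v)) *
          ∫ y in (0:ℝ)..(t - v),
            besselI1 (2 * Real.sqrt (β * α * c * (y + v + u / c) * y))
                / Real.sqrt ((y + v + u / c) * y) *
              Real.exp (-((β * c + α) * y)) := by
  rw [← intervalIntegral.integral_const_mul]
  exact intervalIntegral_eq_of_shift hvt.le fun y hy =>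
    first_crossing_integrand_eq hα hβ hc hu hv hy.1
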